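/- arXiv:2605.27567 — 2 statements merged into one kernel-verified Lean document; each statement's English description precedes it below -/
import Mathlib

section
/- Let H be a real inner product space, let κ > 0, δ ∈ (0,1], γ > 0, and B ≥ 0. Suppose u, v ∈ H satisfy ‖u‖ = ‖v‖ ≤ κ and ⟨u, v⟩ ≥ (1−δ)·‖u‖·‖v‖. If some w ∈ H with ‖w‖ ≤ B achieves the discrimination margin ⟨w, u⟩ − ⟨w, v⟩ ≥ γ, then necessarily B ≥ γ/(κ·√(2δ)). (Enforcing a fixed margin on δ-similar pairs forces the predictor norm to diverge as δ → 0.) -/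
open scoped RealInnerProductSpace

/-- Enforcing a fixed discrimination margin γ on a δ-similar pair forces the
predictor norm to satisfy B ≥ γ/(κ·√(2δ)), which diverges as δ → 0. -/
theorem margin_forces_norm_blowup
    {H : Type*} [NormedAddCommGroup H] [InnerProductSpace ℝ H]
    (κ δ γ B : ℝ) (hκ : 0 < κ) (hδ : δ ∈ Set.Ioc (0 : ℝ) 1) (hγ : 0 < γ) (hB : 0 ≤ B)
    (u v : H) (hnorm : ‖u‖ = ‖v‖) (hκbound : ‖u‖ ≤ κ)
    (hsim : ⟪u, v⟫ ≥ (1 - δ) * ‖u‖ * ‖v‖)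
    (w : H) (hw : ‖w‖ ≤ B)
    (hmargin : ⟪w, u⟫ - ⟪w, v⟫ ≥ γ) :
    B ≥ γ / (κ * Real.sqrt (2 * δ)) := by
  obtain ⟨hδ0, hδ1⟩ := hδ
  have hsq : ‖u - v‖ ^ 2 ≤ 2 * δ * κ ^ 2 := by
    have h1 : ‖u - v‖ ^ 2 = ‖u‖ ^ 2 + ‖v‖ ^ 2 - 2 * ⟪u, v⟫ := by
      rw [@norm_sub_sq_real]; ring
    have h2 : ‖u - v‖ ^ 2 ≤ 2 * δ * ‖u‖ ^ 2 := by
      rw [← hnorm] at hsim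
      rw [h1, ← hnorm]
      nlinarith [hsim]
    have hκ2 : ‖u‖ ^ 2 ≤ κ ^ 2 := by nlinarith [norm_nonneg u]
    nlinarith
  have hsqrt : ‖u - v‖ ≤ κ * Real.sqrt (2 * δ) := by
    have h : ‖u - v‖ ≤ Real.sqrt (2 * δ * κ ^ 2) := by
      rw [← Real.sqrt_sq (norm_nonneg (u - v))]
      exact Real.sqrt_le_sqrt hsq
    calc ‖u - v‖ ≤ Real.sqrt (2 * δ * κ ^ 2) := h
      _ = κ * Real.sqrt (2 * δ) := by
          rw [mul_comm (2 * δ), Real.sqrt_mul (by positivity), Real.sqrt_sq hκ.le]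
  have hip : ⟪w, u⟫ - ⟪w, v⟫ = ⟪w, u - v⟫ := by rw [inner_sub_right]
  have hcs : ⟪w, u - v⟫ ≤ ‖w‖ * ‖u - v‖ := real_inner_le_norm w (u - v)
  have hpos : 0 < κ * Real.sqrt (2 * δ) := by positivity
  rw [ge_iff_le, div_le_iff₀ hpos]
  calc γ ≤ ⟪w, u - v⟫ := hip ▸ hmargin
    _ ≤ ‖w‖ * ‖u - v‖ := hcs
    _ ≤ B * (κ * Real.sqrt (2 * δ)) :=
        mul_le_mul hw hsqrt (norm_nonneg _) hB
end

section
/- Let H be a real inner product space, let L ≥ 1 and 0 ≤ ℓ ≤ L be natural numbers with 2(L−ℓ) < L, and let κ > 0. Let (u_t)_{t=1}^{L} and (v_t)_{t=1}^{L} be families in H with u_t = v_t for all t ≤ ℓ, with ‖u_t‖² ≤ κ²/L and ‖v_t‖² ≤ κ²/L for all t, and suppose the diagonal sums are normalized: Σ_t ‖u_t‖² = Σ_t ‖v_t‖² = κ². Then the normalized kernel similarity satisfies (Σ_t ⟨u_t, v_t⟩) / √((Σ_t ‖u_t‖²)·(Σ_t ‖v_t‖²)) ≥ 1 − 2(L−ℓ)/L.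 (Near-Miss Kernel Similarity Lemma: token sequences sharing a prefix of length ℓ out of L are δ-similar with δ ≤ C(L−ℓ)/L for C = 2.) -/
open scoped RealInnerProductSpace

/-- **Near-Miss Kernel Similarity Lemma.** Token sequences sharing a prefix of
length ℓ out of L, with uniform per-position Jacobian norm bounds κ²/L and
normalized diagonal sums κ², have normalized kernel similarity at least
1 − 2(L−ℓ)/L. -/
theorem near_miss_kernel_similarity
    {H : Type*} [NormedAddCommGroup H] [InnerProductSpace ℝ H]
    (L ℓ : ℕ) (hL : 1 ≤ L) (hℓ : ℓ ≤ L) (hgap : 2 * (L - ℓ) < L) (κ : ℝ) (hκ : 0 < κ)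
    (u v : Fin L → H)
    (hprefix : ∀ t : Fin L, (t : ℕ) < ℓ → u t = v t)
    (hu : ∀ t : Fin L, ‖u t‖ ^ 2 ≤ κ ^ 2 / L)
    (hv : ∀ t : Fin L, ‖v t‖ ^ 2 ≤ κ ^ 2 / L)
    (hdiagu : ∑ t : Fin L, ‖u t‖ ^ 2 = κ ^ 2)
    (hdiagv : ∑ t : Fin L, ‖v t‖ ^ 2 = κ ^ 2) :
    (∑ t : Fin L, ⟪u t, v t⟫) /
        Real.sqrt ((∑ t : Fin L, ‖u t‖ ^ 2) * (∑ t : Fin L, ‖v t‖ ^ 2)) ≥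
      1 - 2 * ((L : ℝ) - ℓ) / L := by
  have hLpos : (0:ℝ) < L := by exact_mod_cast hL
  have hκ2 : (0:ℝ) < κ ^ 2 := by positivity
  set c : ℝ := 2 * κ ^ 2 / L with hc
  have hden : Real.sqrt ((∑ t : Fin L, ‖u t‖ ^ 2) * (∑ t : Fin L, ‖v t‖ ^ 2)) = κ ^ 2 := by
    rw [hdiagu, hdiagv, ← sq, Real.sqrt_sq hκ2.le]
  rw [hden, ge_iff_le, le_div_iff₀ hκ2]
  -- per-term bound
  have hterm : ∀ t : Fin L, ‖u t‖ ^ 2 + (if (t:ℕ) < ℓ then (0:ℝ) else -c) ≤ ⟪u t, v t⟫ := by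
    intro t
    by_cases h : (t:ℕ) < ℓ
    · simp [h, hprefix t h, real_inner_self_eq_norm_sq]
    · simp only [h, if_false]
      have h1 : |⟪u t, v t⟫| ≤ ‖u t‖ * ‖v t‖ := abs_real_inner_le_norm _ _
      have h2 : 2 * (‖u t‖ * ‖v t‖) ≤ ‖u t‖ ^ 2 + ‖v t‖ ^ 2 := by nlinarith [sq_nonneg (‖u t‖ - ‖v t‖)]
      have h3 := hu t; have h4 := hv t
      have : -(‖u t‖ * ‖v t‖) ≤ ⟪u t, v t⟫ := by
        have := abs_le.mp h1; linarith [this.1]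
      have hr : (2:ℝ) * κ ^ 2 / L = 2 * (κ ^ 2 / L) := by ring
      have hc' : ‖u t‖ * ‖v t‖ ≤ κ ^ 2 / L := by linarith
      rw [hc, hr]
      linarith
  have hsum : ∑ t : Fin L, (‖u t‖ ^ 2 + if (t:ℕ) < ℓ then (0:ℝ) else -c) ≤ ∑ t : Fin L, ⟪u t, v t⟫ :=
    Finset.sum_le_sum (fun t _ => hterm t)
  rw [Finset.sum_add_distrib, hdiagu] at hsum
  -- compute the if-sum
  have hcount : ∑ t : Fin L, (if (t:ℕ) < ℓ then (0:ℝ) else -c) = -((L - ℓ : ℕ) * c) := by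
    rw [Fin.sum_univ_eq_sum_range (fun i => if i < ℓ then (0:ℝ) else -c)]
    rw [Finset.sum_ite, Finset.sum_const, Finset.sum_const]
    have : (Finset.range L).filter (· < ℓ) = Finset.range ℓ := by
      ext i; simp; omega
    rw [this]
    have : (Finset.range L).filter (fun i => ¬ i < ℓ) = Finset.Ico ℓ L := by
      ext i; simp; omega
    rw [this, Nat.card_Ico]
    simp
  rw [hcount] at hsum
  have hcast : ((L - ℓ : ℕ) : ℝ) = (L : ℝ) - ℓ := by
    rw [Nat.cast_sub hℓ]
  calc (1 - 2 * ((L:ℝ) - ℓ) / L) * κ ^ 2 = κ ^ 2 + -((L - ℓ : ℕ) * c) := by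
        rw [hcast, hc]; field_simp; ring
    _ ≤ ∑ t : Fin L, ⟪u t, v t⟫ := hsum
end
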